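/- arXiv:2506.18895 — 2 statements merged into one kernel-verified Lean document; each statement's English description precedes it below -/
import Mathlib

section
/- For the Case 1 piecewise tax rule T₁ with aggregate loss S uniformly distributed on [0, w₁+w₂] with probability (1−p₀) and equal to 0 with probability p₀, the expectation is E[T₁(S)] = (1−p₀)·( (w₁+w₂)/2 − (1/(2(w₁+w₂)))·( w₂² − (c−w₁)² + (γ₂/(γ₁+γ₂))·(c−γ₁ζ)² ) ), where c = (1+γ₂/γ₁)w₁ − γ₂ζ. -/
/-!
In Case 1 the breakpoints are ordered, `0 ≤ γ₁ζ ≤ w₁ ≤ c ≤ w₁ + w₂`, so the integral of `T₁` over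
`[0, w₁ + w₂]` splits into the integrals of `s`, of an affine function and of the constant `w₁`.
The bracket in the closed form is `∫ (s - T₁ s)`: the deduction `s - T₁ s` vanishes up to `γ₁ζ`,
equals `γ₂/(γ₁+γ₂) (s - γ₁ζ)` up to `c` and `s - w₁` beyond, whence its three terms.
-/

open intervalIntegral MeasureTheory Set
open scoped Interval

section IteIntegral

variable {E : Type*} {f g : ℝ → E} {x a y : ℝ}

lemma eqOn_ite_le_uIoc_left (hxa : x ≤ a) :
    EqOn (fun s => if s ≤ a then f s else g s) f (Ι x a) := by
  intro s hs
  rw [uIoc_of_le hxa] at hs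
  simp [hs.2]

lemma eqOn_ite_le_uIoc_right (hay : a ≤ y) :
    EqOn (fun s => if s ≤ a then f s else g s) g (Ι a y) := by
  intro s hs
  rw [uIoc_of_le hay] at hs
  simp [not_le.mpr hs.1]

variable [NormedAddCommGroup E] {μ : Measure ℝ}

lemma intervalIntegrable_ite_le (hxa : x ≤ a) (hay : a ≤ y)
    (hf : IntervalIntegrable f μ x a) (hg : IntervalIntegrable g μ a y) :
    IntervalIntegrable (fun s => if s ≤ a then f s else g s) μ x y :=
  ((intervalIntegrable_congr (eqOn_ite_le_uIoc_left hxa)).mpr hf).trans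
    ((intervalIntegrable_congr (eqOn_ite_le_uIoc_right hay)).mpr hg)

lemma integral_ite_le [NormedSpace ℝ E] (hxa : x ≤ a) (hay : a ≤ y)
    (hf : IntervalIntegrable f μ x a) (hg : IntervalIntegrable g μ a y) :
    ∫ s in x..y, (if s ≤ a then f s else g s) ∂μ = (∫ s in x..a, f s ∂μ) + ∫ s in a..y, g s ∂μ := by
  have hleft := (intervalIntegrable_congr (μ := μ) (eqOn_ite_le_uIoc_left (g := g) hxa)).mpr hf
  have hright := (intervalIntegrable_congr (μ := μ) (eqOn_ite_le_uIoc_right (f := f) hay)).mpr hg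
  rw [← integral_add_adjacent_intervals hleft hright,
    integral_congr_ae (Filter.Eventually.of_forall (eqOn_ite_le_uIoc_left hxa)),
    integral_congr_ae (Filter.Eventually.of_forall (eqOn_ite_le_uIoc_right hay))]

end IteIntegral

lemma integral_ite_id_affine_const {a c W : ℝ} (k m w : ℝ) (ha : 0 ≤ a) (hac : a ≤ c)
    (hcW : c ≤ W) :
    ∫ s in (0:ℝ)..W, (if s ≤ a then s else if s ≤ c then k * s + m else w)
      = a ^ 2 / 2 + (k * ((c ^ 2 - a ^ 2) / 2) + m * (c - a)) + w * (W - c) := by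
  have hlin : IntervalIntegrable (fun s => k * s) volume a c := intervalIntegrable_id.const_mul k
  have haff : IntervalIntegrable (fun s => k * s + m) volume a c := hlin.add intervalIntegrable_const
  rw [integral_ite_le ha (hac.trans hcW) intervalIntegrable_id
      (intervalIntegrable_ite_le hac hcW haff intervalIntegrable_const),
    integral_ite_le hac hcW haff intervalIntegrable_const,
    integral_add hlin intervalIntegrable_const, intervalIntegral.integral_const_mul]
  simp only [integral_id, intervalIntegral.integral_const, smul_eq_mul]
  ring

theorem stmt_11_general (w1 w2 γ1 γ2 ζ p0 : ℝ) (hw1 : 0 < w1) (hw2 : 0 < w2)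
    (hγ1 : 0 < γ1) (hγ2 : 0 < γ2) (horder : w1 / γ1 ≤ w2 / γ2)
    (hζ : ζ ∈ Set.Icc 0 (w1 / γ1))
    (c : ℝ) (hc : c = (1 + γ2 / γ1) * w1 - γ2 * ζ)
    (T1 : ℝ → ℝ)
    (hT1 : ∀ s, T1 s = if s ≤ γ1 * ζ then s
      else if s ≤ c then γ1 / (γ1 + γ2) * s + γ1 * γ2 / (γ1 + γ2) * ζ
      else w1) :
    (1 - p0) / (w1 + w2) * ∫ s in (0:ℝ)..(w1 + w2), T1 s
      = (1 - p0) * ((w1 + w2) / 2 -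
          (1 / (2 * (w1 + w2))) *
            (w2 ^ 2 - (c - w1) ^ 2 + (γ2 / (γ1 + γ2)) * (c - γ1 * ζ) ^ 2)) := by
  obtain ⟨hζ0, hζw⟩ := hζ
  have hkink : γ1 * ζ ≤ w1 := by rwa [le_div_iff₀' hγ1] at hζw
  have hc' : c = w1 + γ2 * (w1 / γ1) - γ2 * ζ := by rw [hc]; ring
  have hw1c : w1 ≤ c := by linarith [mul_le_mul_of_nonneg_left hζw hγ2.le]
  have hcW : c ≤ w1 + w2 := by
    linarith [(le_div_iff₀' hγ2).mp horder, mul_nonneg hγ2.le hζ0]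
  rw [show T1 = _ from funext hT1,
    integral_ite_id_affine_const _ _ _ (by positivity) (hkink.trans hw1c) hcW, hc]
  have hW : w1 + w2 ≠ 0 := by positivity
  field_simp
  ring

theorem stmt_11 (w1 w2 γ1 γ2 ζ p0 : ℝ) (hw1 : 0 < w1) (hw2 : 0 < w2)
    (hγ1 : 0 < γ1) (hγ2 : 0 < γ2) (horder : w1 / γ1 ≤ w2 / γ2)
    (hζ : ζ ∈ Set.Icc 0 (w1 / γ1)) (hp0 : p0 ∈ Set.Ico (0:ℝ) 1)
    (c : ℝ) (hc : c = (1 + γ2 / γ1) * w1 - γ2 * ζ)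
    (T1 : ℝ → ℝ)
    (hT1 : ∀ s, T1 s = if s ≤ γ1 * ζ then s
      else if s ≤ c then γ1 / (γ1 + γ2) * s + γ1 * γ2 / (γ1 + γ2) * ζ
      else w1) :
    (1 - p0) / (w1 + w2) * ∫ s in (0:ℝ)..(w1 + w2), T1 s
      = (1 - p0) * ((w1 + w2) / 2 -
          (1 / (2 * (w1 + w2))) *
            (w2 ^ 2 - (c - w1) ^ 2 + (γ2 / (γ1 + γ2)) * (c - γ1 * ζ) ^ 2)) :=
  stmt_11_general w1 w2 γ1 γ2 ζ p0 hw1 hw2 hγ1 hγ2 horder hζ c hc T1 hT1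
end

section
/- Define, for two CARA agents with parameters as in Case 1, the parametric inverse Λ(s) = α₁·e^{s/γ₁} for 0 ≤ s ≤ γ₁ζ, Λ(s) = (α₁^{γ₁}·α₂^{γ₂}·e^{s})^{1/(γ₁+γ₂)} for γ₁ζ ≤ s ≤ c, and Λ(s) = α₂·e^{(s−w₁)/γ₂} for c ≤ s ≤ w₁+w₂, with c = (1+γ₂/γ₁)w₁ − γ₂ζ and ζ = ln(α₂/α₁) ∈ [0, w₁/γ₁]. Then Λ is continuous and strictly increasing on [0, w₁+w₂]. -/
/-!
Taking logarithms, `log ∘ Λ` is piecewise affine with slopes `1/γ₁`, `1/(γ₁+γ₂)` and `1/γ₂`,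
all positive. The definitions of `ζ` and `c` are exactly what makes consecutive affine pieces
agree at the breakpoints `γ₁ζ ≤ c`, so `log ∘ Λ`, and with it `Λ = exp ∘ log ∘ Λ`, is continuous
and strictly increasing.
-/

open Real

theorem StrictMono.ite_le {α β : Type*} [LinearOrder α] [Preorder β] {f g : α → β} {a : α}
    (hf : StrictMono f) (hg : StrictMono g) (hfg : f a ≤ g a) :
    StrictMono fun x => if x ≤ a then f x else g x := by
  intro x y hxy
  dsimp only
  split_ifs with hx hy hy
  · exact hf hxy
  · exact (hf.monotone hx).trans_lt (hfg.trans_lt (hg (not_le.mp hy)))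
  · exact absurd (hxy.le.trans hy) hx
  · exact hg hxy

section ThreePieces

variable {α β : Type*} [LinearOrder α] {f g h : α → β} {a b : α}

theorem StrictMono.ite_le_ite_le [Preorder β] (hab : a ≤ b)
    (hf : StrictMono f) (hg : StrictMono g) (hh : StrictMono h)
    (hfg : f a ≤ g a) (hgh : g b ≤ h b) :
    StrictMono fun x => if x ≤ a then f x else if x ≤ b then g x else h x :=
  hf.ite_le (hg.ite_le hh hgh) (by rwa [if_pos hab])

theorem continuous_ite_le_ite_le [TopologicalSpace α] [OrderClosedTopology α]
    [TopologicalSpace β] (hab : a ≤ b)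
    (hf : Continuous f) (hg : Continuous g) (hh : Continuous h)
    (hfg : f a = g a) (hgh : g b = h b) :
    Continuous fun x => if x ≤ a then f x else if x ≤ b then g x else h x :=
  hf.if_le (hg.if_le hh continuous_id continuous_const fun _ hx => hx ▸ hgh)
    continuous_id continuous_const fun _ hx => by rwa [hx, if_pos hab]

end ThreePieces

theorem Real.mul_exp_eq_exp_log_add {a : ℝ} (ha : 0 < a) (x : ℝ) :
    a * exp x = exp (log a + x) := by
  rw [exp_add, exp_log ha]

theorem Real.rpow_mul_rpow_mul_exp_rpow_one_div {a b : ℝ} (ha : 0 < a) (hb : 0 < b)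
    (γ₁ γ₂ s : ℝ) :
    (a ^ γ₁ * b ^ γ₂ * exp s) ^ (1 / (γ₁ + γ₂)) =
      exp ((γ₁ * log a + γ₂ * log b + s) / (γ₁ + γ₂)) := by
  rw [rpow_def_of_pos (by positivity), log_mul (by positivity) (exp_pos s).ne',
    log_mul (by positivity) (by positivity), log_rpow ha, log_rpow hb, log_exp, mul_one_div]

theorem stmt_14_general (w1 w2 γ1 γ2 α1 : ℝ)
    (hγ1 : 0 < γ1) (hγ2 : 0 < γ2)
    (hα : α1 ∈ Set.Ioo (0:ℝ) 1)
    (ζ : ℝ) (hζdef : ζ = Real.log ((1 - α1) / α1))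
    (hζ : ζ ∈ Set.Icc 0 (w1 / γ1))
    (c : ℝ) (hc : c = (1 + γ2 / γ1) * w1 - γ2 * ζ)
    (Λ : ℝ → ℝ)
    (hΛ : ∀ s, Λ s = if s ≤ γ1 * ζ then α1 * Real.exp (s / γ1)
      else if s ≤ c then (α1 ^ γ1 * (1 - α1) ^ γ2 * Real.exp s) ^ (1 / (γ1 + γ2))
      else (1 - α1) * Real.exp ((s - w1) / γ2)) :
    ContinuousOn Λ (Set.Icc 0 (w1 + w2)) ∧ StrictMonoOn Λ (Set.Icc 0 (w1 + w2)) := by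
  obtain ⟨hα1, hα1'⟩ := hα
  have hα2 : 0 < 1 - α1 := by linarith
  have hζlog : ζ = log (1 - α1) - log α1 := by rw [hζdef, log_div hα2.ne' hα1.ne']
  have hΛexp : Λ = fun s => exp (if s ≤ γ1 * ζ then log α1 + s / γ1
      else if s ≤ c then (γ1 * log α1 + γ2 * log (1 - α1) + s) / (γ1 + γ2)
      else log (1 - α1) + (s - w1) / γ2) := by
    funext s
    simp only [hΛ s, apply_ite exp, mul_exp_eq_exp_log_add hα1, mul_exp_eq_exp_log_add hα2,
      rpow_mul_rpow_mul_exp_rpow_one_div hα1 hα2]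
  have hbreak : γ1 * ζ ≤ c := by
    have hgap : c - γ1 * ζ = (1 + γ2 / γ1) * (w1 - γ1 * ζ) := by rw [hc]; field_simp; ring
    rw [← sub_nonneg, hgap]
    exact mul_nonneg (by positivity) (sub_nonneg.mpr ((le_div_iff₀' hγ1).mp hζ.2))
  have hmatch₁ :
      log α1 + γ1 * ζ / γ1 = (γ1 * log α1 + γ2 * log (1 - α1) + γ1 * ζ) / (γ1 + γ2) := by
    rw [hζlog]; field_simp; ring
  have hmatch₂ :
      (γ1 * log α1 + γ2 * log (1 - α1) + c) / (γ1 + γ2) = log (1 - α1) + (c - w1) / γ2 := by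
    rw [hc, hζlog]; field_simp; ring
  rw [hΛexp]
  refine ⟨(continuous_exp.comp ?_).continuousOn, (exp_strictMono.comp ?_).strictMonoOn _⟩
  · exact continuous_ite_le_ite_le hbreak (by fun_prop) (by fun_prop) (by fun_prop)
      hmatch₁ hmatch₂
  · exact StrictMono.ite_le_ite_le hbreak (fun _ _ h => by gcongr)
      (fun _ _ h => by gcongr) (fun _ _ h => by gcongr)
      hmatch₁.le hmatch₂.le

theorem stmt_14 (w1 w2 γ1 γ2 α1 : ℝ) (hw1 : 0 < w1) (hw2 : 0 < w2)
    (hγ1 : 0 < γ1) (hγ2 : 0 < γ2) (horder : w1 / γ1 ≤ w2 / γ2)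
    (hα : α1 ∈ Set.Ioo (0:ℝ) 1)
    (ζ : ℝ) (hζdef : ζ = Real.log ((1 - α1) / α1))
    (hζ : ζ ∈ Set.Icc 0 (w1 / γ1))
    (c : ℝ) (hc : c = (1 + γ2 / γ1) * w1 - γ2 * ζ)
    (Λ : ℝ → ℝ)
    (hΛ : ∀ s, Λ s = if s ≤ γ1 * ζ then α1 * Real.exp (s / γ1)
      else if s ≤ c then (α1 ^ γ1 * (1 - α1) ^ γ2 * Real.exp s) ^ (1 / (γ1 + γ2))
      else (1 - α1) * Real.exp ((s - w1) / γ2)) :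
    ContinuousOn Λ (Set.Icc 0 (w1 + w2)) ∧ StrictMonoOn Λ (Set.Icc 0 (w1 + w2)) :=
  stmt_14_general w1 w2 γ1 γ2 α1 hγ1 hγ2 hα ζ hζdef hζ c hc Λ hΛ
end
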